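/- Let $\Omega = [a_1,b_1] \times [a_2,b_2] \subset \mathbb{R}^2$ be a closed rectangle with $a_1 < b_1$ and $a_2 < b_2$. Let $\mathbf{a}_1, \mathbf{a}_2 : \mathbb{R}^2 \to \mathbb{R}^2$ be continuous on $\Omega$ and differentiable on its interior with integrable partial derivatives. Let $w_1, w_2 : \mathbb{R}^2 \to \mathbb{R}$ be $C^1$ on $\Omega$, twice differentiable on its interior with integrable second partial derivatives, with $w_1 = w_2 = 0$ on $\partial\Omega$. Let $g_1, g_2 : \mathbb{R}^2 \to \mathbb{R}$ be $C^1$ on $\Omega$, twice differentiable on its interior with integrable second partial derivatives, with $g_1 = g_2 = 0$ on $\partial\Omega$, and satisfying $\Delta g_i = \nabla \cdot \mathbf{a}_i$ on the interior of $\Omega$ for $i = 1, 2$. Then $\iint_{\Omega} \big( -\mathbf{a}_1 \cdot \nabla w_1 - \mathbf{a}_2 \cdot \nabla w_2 \big)\, dA = \iint_{\Omega} \big( g_1\, \Delta w_1 + g_2\, \Delta w_2 \big)\, dA$. -/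

import Mathlib

open MeasureTheory Set

/-- Partial derivative in the `x` direction of a function on `ℝ × ℝ`. -/
noncomputable def pdx (f : ℝ × ℝ → ℝ) : ℝ × ℝ → ℝ := fun p => fderiv ℝ f p (1, 0)

/-- Partial derivative in the `y` direction of a function on `ℝ × ℝ`. -/
noncomputable def pdy (f : ℝ × ℝ → ℝ) : ℝ × ℝ → ℝ := fun p => fderiv ℝ f p (0, 1)

/-- Laplacian of a function on `ℝ × ℝ`. -/
noncomputable def lap (f : ℝ × ℝ → ℝ) : ℝ × ℝ → ℝ :=
  fun p => pdx (pdx f) p + pdy (pdy f) p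

/-! The two components are handled separately. The product rule and the divergence theorem on the
rectangle, whose boundary terms vanish by the Dirichlet data, give `∫ a ⬝ ∇w = -∫ w ∇ ⬝ a`;
replacing `∇ ⬝ a` by `Δg` and moving one derivative at a time, through `∫ ∇g ⬝ ∇w`, gives
`∫ g Δw`. Since `w` and `g` are only `C¹` up to the boundary, where `fderiv` is junk, the vector
fields fed to the divergence theorem use `fderivWithin` on the closed rectangle: it is continuous
there and agrees with `fderiv` off the null set `∂Ω`. -/

open Filter Topology

section Convex

variable {E : Type*} [NormedAddCommGroup E] [NormedSpace ℝ E] [FiniteDimensional ℝ E]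
  [MeasurableSpace E] [BorelSpace E] {μ : Measure E} [μ.IsAddHaarMeasure] {s : Set E}

theorem Convex.ae_restrict_of_forall_mem_interior (hs : Convex ℝ s) {P : E → Prop}
    (h : ∀ x ∈ interior s, P x) : ∀ᵐ x ∂μ.restrict s, P x := by
  rw [← Measure.restrict_congr_set (interior_ae_eq_of_null_frontier (hs.addHaar_frontier μ))]
  exact ae_restrict_of_forall_mem measurableSet_interior h

theorem Convex.integrableOn_mul_fderiv_apply (hs : Convex ℝ s) (hsc : IsCompact s)
    (hsi : (interior s).Nonempty) {c u : E → ℝ} (hc : ContinuousOn c s)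
    (hu : ContDiffOn ℝ 1 u s) (v : E) :
    IntegrableOn (fun x => c x * fderiv ℝ u x v) s μ := by
  have hcont : ContinuousOn (fun x => c x * fderivWithin ℝ u s x v) s :=
    hc.mul ((hu.continuousOn_fderivWithin (uniqueDiffOn_convex hs hsi) le_rfl).clm_apply
      continuousOn_const)
  refine (hcont.integrableOn_compact hsc).congr_fun_ae
    (hs.ae_restrict_of_forall_mem_interior fun x hx => ?_)
  dsimp only
  rw [fderivWithin_of_mem_nhds (mem_interior_iff_mem_nhds.1 hx)]

end Convex

section Derivatives

variable {E : Type*} [NormedAddCommGroup E] [NormedSpace ℝ E] {s : Set E} {u : E → ℝ} {x : E}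

theorem fderivWithin_apply_eventuallyEq_of_mem_interior (hx : x ∈ interior s) (v : E) :
    (fun y => fderivWithin ℝ u s y v) =ᶠ[𝓝 x] fun y => fderiv ℝ u y v := by
  filter_upwards [isOpen_interior.mem_nhds hx] with y hy
  rw [fderivWithin_of_mem_nhds (mem_interior_iff_mem_nhds.1 hy)]

end Derivatives

section Rectangle

variable {a₁ b₁ a₂ b₂ : ℝ}

theorem integral_divergence_Icc_prod_Icc_eq_zero (h₁ : a₁ ≤ b₁) (h₂ : a₂ ≤ b₂) {f g : ℝ × ℝ → ℝ}
    {f' g' : ℝ × ℝ → ℝ × ℝ →L[ℝ] ℝ} (hf : ContinuousOn f (Icc a₁ b₁ ×ˢ Icc a₂ b₂))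
    (hg : ContinuousOn g (Icc a₁ b₁ ×ˢ Icc a₂ b₂))
    (hf' : ∀ p ∈ interior (Icc a₁ b₁ ×ˢ Icc a₂ b₂), HasFDerivAt f (f' p) p)
    (hg' : ∀ p ∈ interior (Icc a₁ b₁ ×ˢ Icc a₂ b₂), HasFDerivAt g (g' p) p)
    (hi : IntegrableOn (fun p => f' p (1, 0) + g' p (0, 1)) (Icc a₁ b₁ ×ˢ Icc a₂ b₂))
    (hf0 : ∀ p ∈ frontier (Icc a₁ b₁ ×ˢ Icc a₂ b₂), f p = 0)
    (hg0 : ∀ p ∈ frontier (Icc a₁ b₁ ×ˢ Icc a₂ b₂), g p = 0) :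
    ∫ p in Icc a₁ b₁ ×ˢ Icc a₂ b₂, (f' p (1, 0) + g' p (0, 1)) = 0 := by
  have hfr : frontier (Icc a₁ b₁ ×ˢ Icc a₂ b₂) =
      Icc a₁ b₁ ×ˢ {a₂, b₂} ∪ {a₁, b₁} ×ˢ Icc a₂ b₂ := by
    rw [frontier_prod_eq, closure_Icc, closure_Icc, frontier_Icc h₁, frontier_Icc h₂]
  have edge {a b : ℝ} (hab : a ≤ b) {φ : ℝ → ℝ} (hφ : ∀ t ∈ Icc a b, φ t = 0) :
      ∫ t in a..b, φ t = 0 :=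
    intervalIntegral.integral_zero_ae <| ae_of_all _ fun t ht =>
      hφ t (uIcc_of_le hab ▸ uIoc_subset_uIcc ht)
  have hint : interior (Icc a₁ b₁ ×ˢ Icc a₂ b₂) = Ioo a₁ b₁ ×ˢ Ioo a₂ b₂ := by
    rw [interior_prod_eq, interior_Icc, interior_Icc]
  have hdiv := integral_divergence_prod_Icc_of_hasFDerivAt_off_countable_of_le f g f' g'
    (a₁, a₂) (b₁, b₂) ⟨h₁, h₂⟩ ∅ countable_empty (by rwa [Icc_prod_eq]) (by rwa [Icc_prod_eq])
    (fun p hp => hf' p (hint ▸ hp.1)) (fun p hp => hg' p (hint ▸ hp.1)) (by rwa [Icc_prod_eq])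
  rw [Icc_prod_eq] at hdiv
  rw [hdiv, edge h₁ fun x hx => hg0 _ ?_, edge h₁ fun x hx => hg0 _ ?_,
    edge h₂ fun y hy => hf0 _ ?_, edge h₂ fun y hy => hf0 _ ?_, sub_self, zero_add, sub_self]
  all_goals simp_all

theorem nonempty_interior_Icc_prod_Icc (h₁ : a₁ < b₁) (h₂ : a₂ < b₂) :
    (interior (Icc a₁ b₁ ×ˢ Icc a₂ b₂)).Nonempty := by
  rw [interior_prod_eq, interior_Icc, interior_Icc]
  exact (nonempty_Ioo.2 h₁).prod (nonempty_Ioo.2 h₂)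

theorem integrableOn_mul_pdx_add_mul_pdy (h₁ : a₁ < b₁) (h₂ : a₂ < b₂) {A₁ A₂ w : ℝ × ℝ → ℝ}
    (hA₁ : ContinuousOn A₁ (Icc a₁ b₁ ×ˢ Icc a₂ b₂))
    (hA₂ : ContinuousOn A₂ (Icc a₁ b₁ ×ˢ Icc a₂ b₂))
    (hw : ContDiffOn ℝ 1 w (Icc a₁ b₁ ×ˢ Icc a₂ b₂)) :
    IntegrableOn (fun p => A₁ p * pdx w p + A₂ p * pdy w p) (Icc a₁ b₁ ×ˢ Icc a₂ b₂) := by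
  have hΩ : Convex ℝ (Icc a₁ b₁ ×ˢ Icc a₂ b₂) := (convex_Icc _ _).prod (convex_Icc _ _)
  have hK : IsCompact (Icc a₁ b₁ ×ˢ Icc a₂ b₂) := isCompact_Icc.prod isCompact_Icc
  have hint := nonempty_interior_Icc_prod_Icc h₁ h₂
  exact (hΩ.integrableOn_mul_fderiv_apply hK hint hA₁ hw (1, 0)).add
    (hΩ.integrableOn_mul_fderiv_apply hK hint hA₂ hw (0, 1))

theorem integral_mul_pdx_add_mul_pdy_eq_neg_integral_mul_div (h₁ : a₁ < b₁) (h₂ : a₂ < b₂)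
    {A₁ A₂ w : ℝ × ℝ → ℝ} (hA₁ : ContinuousOn A₁ (Icc a₁ b₁ ×ˢ Icc a₂ b₂))
    (hA₂ : ContinuousOn A₂ (Icc a₁ b₁ ×ˢ Icc a₂ b₂))
    (hA₁d : ∀ p ∈ interior (Icc a₁ b₁ ×ˢ Icc a₂ b₂), DifferentiableAt ℝ A₁ p)
    (hA₂d : ∀ p ∈ interior (Icc a₁ b₁ ×ˢ Icc a₂ b₂), DifferentiableAt ℝ A₂ p)
    (hdiv : IntegrableOn (fun p => pdx A₁ p + pdy A₂ p) (Icc a₁ b₁ ×ˢ Icc a₂ b₂))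
    (hw : ContDiffOn ℝ 1 w (Icc a₁ b₁ ×ˢ Icc a₂ b₂))
    (hw0 : ∀ p ∈ frontier (Icc a₁ b₁ ×ˢ Icc a₂ b₂), w p = 0) :
    ∫ p in Icc a₁ b₁ ×ˢ Icc a₂ b₂, (A₁ p * pdx w p + A₂ p * pdy w p) =
      -∫ p in Icc a₁ b₁ ×ˢ Icc a₂ b₂, w p * (pdx A₁ p + pdy A₂ p) := by
  have hwd : ∀ p ∈ interior (Icc a₁ b₁ ×ˢ Icc a₂ b₂), DifferentiableAt ℝ w p := fun p hp =>
    (hw.differentiableOn one_ne_zero).differentiableAt (mem_interior_iff_mem_nhds.1 hp)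
  have hflux := integrableOn_mul_pdx_add_mul_pdy h₁ h₂ hA₁ hA₂ hw
  have hsrc : IntegrableOn (fun p => w p * (pdx A₁ p + pdy A₂ p)) (Icc a₁ b₁ ×ˢ Icc a₂ b₂) :=
    IntegrableOn.continuousOn_mul hw.continuousOn hdiv (isCompact_Icc.prod isCompact_Icc)
  have hpt : (fun p => (A₁ p • fderiv ℝ w p + w p • fderiv ℝ A₁ p) (1, 0) +
      (A₂ p • fderiv ℝ w p + w p • fderiv ℝ A₂ p) (0, 1)) =
      fun p => (A₁ p * pdx w p + A₂ p * pdy w p) + w p * (pdx A₁ p + pdy A₂ p) := by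
    ext p
    simp only [add_apply, smul_apply, smul_eq_mul, pdx, pdy]
    ring
  have hzero := integral_divergence_Icc_prod_Icc_eq_zero h₁.le h₂.le
    (hA₁.mul hw.continuousOn) (hA₂.mul hw.continuousOn)
    (fun p hp => (hA₁d p hp).hasFDerivAt.mul (hwd p hp).hasFDerivAt)
    (fun p hp => (hA₂d p hp).hasFDerivAt.mul (hwd p hp).hasFDerivAt)
    (hpt ▸ hflux.add hsrc) (fun p hp => by simp [hw0 p hp]) (fun p hp => by simp [hw0 p hp])
  rw [hpt, integral_add hflux hsrc] at hzero
  exact eq_neg_of_add_eq_zero_left hzero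

theorem integral_pdx_mul_pdx_add_pdy_mul_pdy_eq_neg_integral_mul_lap (h₁ : a₁ < b₁) (h₂ : a₂ < b₂)
    {u g : ℝ × ℝ → ℝ} (hu : ContDiffOn ℝ 1 u (Icc a₁ b₁ ×ˢ Icc a₂ b₂))
    (hud2 : ∀ p ∈ interior (Icc a₁ b₁ ×ˢ Icc a₂ b₂), DifferentiableAt ℝ (fderiv ℝ u) p)
    (hlap : IntegrableOn (lap u) (Icc a₁ b₁ ×ˢ Icc a₂ b₂))
    (hg : ContDiffOn ℝ 1 g (Icc a₁ b₁ ×ˢ Icc a₂ b₂))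
    (hg0 : ∀ p ∈ frontier (Icc a₁ b₁ ×ˢ Icc a₂ b₂), g p = 0) :
    ∫ p in Icc a₁ b₁ ×ˢ Icc a₂ b₂, (pdx u p * pdx g p + pdy u p * pdy g p) =
      -∫ p in Icc a₁ b₁ ×ˢ Icc a₂ b₂, g p * lap u p := by
  have hΩ : Convex ℝ (Icc a₁ b₁ ×ˢ Icc a₂ b₂) := (convex_Icc _ _).prod (convex_Icc _ _)
  set U : ℝ × ℝ → ℝ × ℝ → ℝ := fun v p => fderivWithin ℝ u (Icc a₁ b₁ ×ˢ Icc a₂ b₂) p v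
  have hU_cont (v : ℝ × ℝ) : ContinuousOn (U v) (Icc a₁ b₁ ×ˢ Icc a₂ b₂) :=
    (hu.continuousOn_fderivWithin
      (uniqueDiffOn_convex hΩ (nonempty_interior_Icc_prod_Icc h₁ h₂)) le_rfl).clm_apply
      continuousOn_const
  have hU_diff (v p : ℝ × ℝ) (hp : p ∈ interior (Icc a₁ b₁ ×ˢ Icc a₂ b₂)) :
      DifferentiableAt ℝ (U v) p :=
    ((hud2 p hp).clm_apply (differentiableAt_const v)).congr_of_eventuallyEq
      (fderivWithin_apply_eventuallyEq_of_mem_interior hp v)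
  have hU_div : ∀ᵐ p ∂volume.restrict (Icc a₁ b₁ ×ˢ Icc a₂ b₂),
      pdx (U (1, 0)) p + pdy (U (0, 1)) p = lap u p :=
    hΩ.ae_restrict_of_forall_mem_interior fun p hp => by
      simp only [pdx, pdy, lap, U,
        (fderivWithin_apply_eventuallyEq_of_mem_interior hp _).fderiv_eq]
      rfl
  have hU_eq : ∀ᵐ p ∂volume.restrict (Icc a₁ b₁ ×ˢ Icc a₂ b₂),
      pdx u p * pdx g p + pdy u p * pdy g p = U (1, 0) p * pdx g p + U (0, 1) p * pdy g p :=
    hΩ.ae_restrict_of_forall_mem_interior fun p hp => by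
      simp only [pdx, pdy, U, fderivWithin_of_mem_nhds (mem_interior_iff_mem_nhds.1 hp)]
  calc ∫ p in Icc a₁ b₁ ×ˢ Icc a₂ b₂, (pdx u p * pdx g p + pdy u p * pdy g p)
      = ∫ p in Icc a₁ b₁ ×ˢ Icc a₂ b₂, (U (1, 0) p * pdx g p + U (0, 1) p * pdy g p) :=
        integral_congr_ae hU_eq
    _ = -∫ p in Icc a₁ b₁ ×ˢ Icc a₂ b₂, g p * (pdx (U (1, 0)) p + pdy (U (0, 1)) p) :=
        integral_mul_pdx_add_mul_pdy_eq_neg_integral_mul_div h₁ h₂ (hU_cont _) (hU_cont _)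
          (hU_diff _) (hU_diff _) (hlap.congr_fun_ae (hU_div.mono fun _ h => h.symm)) hg hg0
    _ = -∫ p in Icc a₁ b₁ ×ˢ Icc a₂ b₂, g p * lap u p := by
        rw [integral_congr_ae (hU_div.mono fun p hp => by rw [hp])]

theorem neg_integral_mul_pdx_add_mul_pdy_eq_integral_mul_lap (h₁ : a₁ < b₁) (h₂ : a₂ < b₂)
    {A₁ A₂ w g : ℝ × ℝ → ℝ} (hA₁ : ContinuousOn A₁ (Icc a₁ b₁ ×ˢ Icc a₂ b₂))
    (hA₂ : ContinuousOn A₂ (Icc a₁ b₁ ×ˢ Icc a₂ b₂))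
    (hA₁d : ∀ p ∈ interior (Icc a₁ b₁ ×ˢ Icc a₂ b₂), DifferentiableAt ℝ A₁ p)
    (hA₂d : ∀ p ∈ interior (Icc a₁ b₁ ×ˢ Icc a₂ b₂), DifferentiableAt ℝ A₂ p)
    (hdiv : IntegrableOn (fun p => pdx A₁ p + pdy A₂ p) (Icc a₁ b₁ ×ˢ Icc a₂ b₂))
    (hw : ContDiffOn ℝ 1 w (Icc a₁ b₁ ×ˢ Icc a₂ b₂))
    (hwd2 : ∀ p ∈ interior (Icc a₁ b₁ ×ˢ Icc a₂ b₂), DifferentiableAt ℝ (fderiv ℝ w) p)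
    (hlapw : IntegrableOn (lap w) (Icc a₁ b₁ ×ˢ Icc a₂ b₂))
    (hw0 : ∀ p ∈ frontier (Icc a₁ b₁ ×ˢ Icc a₂ b₂), w p = 0)
    (hg : ContDiffOn ℝ 1 g (Icc a₁ b₁ ×ˢ Icc a₂ b₂))
    (hgd2 : ∀ p ∈ interior (Icc a₁ b₁ ×ˢ Icc a₂ b₂), DifferentiableAt ℝ (fderiv ℝ g) p)
    (hg0 : ∀ p ∈ frontier (Icc a₁ b₁ ×ˢ Icc a₂ b₂), g p = 0)
    (hpois : ∀ p ∈ interior (Icc a₁ b₁ ×ˢ Icc a₂ b₂), lap g p = pdx A₁ p + pdy A₂ p) :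
    -∫ p in Icc a₁ b₁ ×ˢ Icc a₂ b₂, (A₁ p * pdx w p + A₂ p * pdy w p) =
      ∫ p in Icc a₁ b₁ ×ˢ Icc a₂ b₂, g p * lap w p := by
  have hpois_ae :
      lap g =ᵐ[volume.restrict (Icc a₁ b₁ ×ˢ Icc a₂ b₂)] fun p => pdx A₁ p + pdy A₂ p :=
    ((convex_Icc _ _).prod (convex_Icc _ _)).ae_restrict_of_forall_mem_interior hpois
  calc -∫ p in Icc a₁ b₁ ×ˢ Icc a₂ b₂, (A₁ p * pdx w p + A₂ p * pdy w p)
      = ∫ p in Icc a₁ b₁ ×ˢ Icc a₂ b₂, w p * (pdx A₁ p + pdy A₂ p) := by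
        rw [integral_mul_pdx_add_mul_pdy_eq_neg_integral_mul_div h₁ h₂ hA₁ hA₂ hA₁d hA₂d hdiv hw
          hw0, neg_neg]
    _ = ∫ p in Icc a₁ b₁ ×ˢ Icc a₂ b₂, w p * lap g p :=
        integral_congr_ae (hpois_ae.mono fun p hp => congrArg (w p * ·) hp.symm)
    _ = -∫ p in Icc a₁ b₁ ×ˢ Icc a₂ b₂, (pdx g p * pdx w p + pdy g p * pdy w p) := by
        rw [integral_pdx_mul_pdx_add_pdy_mul_pdy_eq_neg_integral_mul_lap h₁ h₂ hg hgd2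
          (hdiv.congr_fun_ae hpois_ae.symm) hw hw0, neg_neg]
    _ = -∫ p in Icc a₁ b₁ ×ˢ Icc a₂ b₂, (pdx w p * pdx g p + pdy w p * pdy g p) := by
        simp only [mul_comm]
    _ = ∫ p in Icc a₁ b₁ ×ˢ Icc a₂ b₂, g p * lap w p := by
        rw [integral_pdx_mul_pdx_add_pdy_mul_pdy_eq_neg_integral_mul_lap h₁ h₂ hw hwd2 hlapw hg
          hg0, neg_neg]

end Rectangle

theorem adjoint_duality_step_general
    (a₁ b₁ a₂ b₂ : ℝ) (hab₁ : a₁ < b₁) (hab₂ : a₂ < b₂)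
    (A₁₁ A₁₂ A₂₁ A₂₂ w₁ w₂ g₁ g₂ : ℝ × ℝ → ℝ)
    (hA₁₁ : ContinuousOn A₁₁ (Icc a₁ b₁ ×ˢ Icc a₂ b₂))
    (hA₁₂ : ContinuousOn A₁₂ (Icc a₁ b₁ ×ˢ Icc a₂ b₂))
    (hA₂₁ : ContinuousOn A₂₁ (Icc a₁ b₁ ×ˢ Icc a₂ b₂))
    (hA₂₂ : ContinuousOn A₂₂ (Icc a₁ b₁ ×ˢ Icc a₂ b₂))
    (hA₁₁d : ∀ p ∈ interior (Icc a₁ b₁ ×ˢ Icc a₂ b₂), DifferentiableAt ℝ A₁₁ p)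
    (hA₁₂d : ∀ p ∈ interior (Icc a₁ b₁ ×ˢ Icc a₂ b₂), DifferentiableAt ℝ A₁₂ p)
    (hA₂₁d : ∀ p ∈ interior (Icc a₁ b₁ ×ˢ Icc a₂ b₂), DifferentiableAt ℝ A₂₁ p)
    (hA₂₂d : ∀ p ∈ interior (Icc a₁ b₁ ×ˢ Icc a₂ b₂), DifferentiableAt ℝ A₂₂ p)
    (hiA₁₁x : IntegrableOn (pdx A₁₁) (Icc a₁ b₁ ×ˢ Icc a₂ b₂))
    (hiA₁₂y : IntegrableOn (pdy A₁₂) (Icc a₁ b₁ ×ˢ Icc a₂ b₂))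
    (hiA₂₁x : IntegrableOn (pdx A₂₁) (Icc a₁ b₁ ×ˢ Icc a₂ b₂))
    (hiA₂₂y : IntegrableOn (pdy A₂₂) (Icc a₁ b₁ ×ˢ Icc a₂ b₂))
    (hw₁ : ContDiffOn ℝ 1 w₁ (Icc a₁ b₁ ×ˢ Icc a₂ b₂))
    (hw₂ : ContDiffOn ℝ 1 w₂ (Icc a₁ b₁ ×ˢ Icc a₂ b₂))
    (hw₁d2 : ∀ p ∈ interior (Icc a₁ b₁ ×ˢ Icc a₂ b₂), DifferentiableAt ℝ (fderiv ℝ w₁) p)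
    (hw₂d2 : ∀ p ∈ interior (Icc a₁ b₁ ×ˢ Icc a₂ b₂), DifferentiableAt ℝ (fderiv ℝ w₂) p)
    (hiw₁xx : IntegrableOn (pdx (pdx w₁)) (Icc a₁ b₁ ×ˢ Icc a₂ b₂))
    (hiw₁yy : IntegrableOn (pdy (pdy w₁)) (Icc a₁ b₁ ×ˢ Icc a₂ b₂))
    (hiw₂xx : IntegrableOn (pdx (pdx w₂)) (Icc a₁ b₁ ×ˢ Icc a₂ b₂))
    (hiw₂yy : IntegrableOn (pdy (pdy w₂)) (Icc a₁ b₁ ×ˢ Icc a₂ b₂))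
    (hw₁0 : ∀ p ∈ frontier (Icc a₁ b₁ ×ˢ Icc a₂ b₂), w₁ p = 0)
    (hw₂0 : ∀ p ∈ frontier (Icc a₁ b₁ ×ˢ Icc a₂ b₂), w₂ p = 0)
    (hg₁ : ContDiffOn ℝ 1 g₁ (Icc a₁ b₁ ×ˢ Icc a₂ b₂))
    (hg₂ : ContDiffOn ℝ 1 g₂ (Icc a₁ b₁ ×ˢ Icc a₂ b₂))
    (hg₁d2 : ∀ p ∈ interior (Icc a₁ b₁ ×ˢ Icc a₂ b₂), DifferentiableAt ℝ (fderiv ℝ g₁) p)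
    (hg₂d2 : ∀ p ∈ interior (Icc a₁ b₁ ×ˢ Icc a₂ b₂), DifferentiableAt ℝ (fderiv ℝ g₂) p)
    (hg₁0 : ∀ p ∈ frontier (Icc a₁ b₁ ×ˢ Icc a₂ b₂), g₁ p = 0)
    (hg₂0 : ∀ p ∈ frontier (Icc a₁ b₁ ×ˢ Icc a₂ b₂), g₂ p = 0)
    (hpois₁ : ∀ p ∈ interior (Icc a₁ b₁ ×ˢ Icc a₂ b₂), lap g₁ p = pdx A₁₁ p + pdy A₁₂ p)
    (hpois₂ : ∀ p ∈ interior (Icc a₁ b₁ ×ˢ Icc a₂ b₂), lap g₂ p = pdx A₂₁ p + pdy A₂₂ p) :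
    ∫ p in Icc a₁ b₁ ×ˢ Icc a₂ b₂,
        (-(A₁₁ p * pdx w₁ p + A₁₂ p * pdy w₁ p) - (A₂₁ p * pdx w₂ p + A₂₂ p * pdy w₂ p)) =
      ∫ p in Icc a₁ b₁ ×ˢ Icc a₂ b₂, (g₁ p * lap w₁ p + g₂ p * lap w₂ p) := by
  have hK : IsCompact (Icc a₁ b₁ ×ˢ Icc a₂ b₂) := isCompact_Icc.prod isCompact_Icc
  have hlapw₁ : IntegrableOn (lap w₁) (Icc a₁ b₁ ×ˢ Icc a₂ b₂) := hiw₁xx.add hiw₁yy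
  have hlapw₂ : IntegrableOn (lap w₂) (Icc a₁ b₁ ×ˢ Icc a₂ b₂) := hiw₂xx.add hiw₂yy
  have hdual₁ := neg_integral_mul_pdx_add_mul_pdy_eq_integral_mul_lap hab₁ hab₂ hA₁₁ hA₁₂
    hA₁₁d hA₁₂d (hiA₁₁x.add hiA₁₂y) hw₁ hw₁d2 hlapw₁ hw₁0 hg₁ hg₁d2 hg₁0 hpois₁
  have hdual₂ := neg_integral_mul_pdx_add_mul_pdy_eq_integral_mul_lap hab₁ hab₂ hA₂₁ hA₂₂
    hA₂₁d hA₂₂d (hiA₂₁x.add hiA₂₂y) hw₂ hw₂d2 hlapw₂ hw₂0 hg₂ hg₂d2 hg₂0 hpois₂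
  rw [integral_sub ?_ (integrableOn_mul_pdx_add_mul_pdy hab₁ hab₂ hA₂₁ hA₂₂ hw₂),
    integral_add (IntegrableOn.continuousOn_mul hg₁.continuousOn hlapw₁ hK)
      (IntegrableOn.continuousOn_mul hg₂.continuousOn hlapw₂ hK),
    integral_neg, hdual₁, ← hdual₂, sub_eq_add_neg]
  exact (integrableOn_mul_pdx_add_mul_pdy hab₁ hab₂ hA₁₁ hA₁₂ hw₁).neg

/-- **Adjoint (duality) step.** On the closed rectangle `Ω = [a₁,b₁] × [a₂,b₂]`, with vector
fields `aᵢ = (Aᵢ₁, Aᵢ₂)`, functions `wᵢ` vanishing on `∂Ω`, and adjoint variables `gᵢ`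
vanishing on `∂Ω` and solving `Δgᵢ = ∇ ⬝ aᵢ` in the interior,
`∬_Ω (-a₁ ⬝ ∇w₁ - a₂ ⬝ ∇w₂) dA = ∬_Ω (g₁ Δw₁ + g₂ Δw₂) dA`. -/
theorem adjoint_duality_step
    (a₁ b₁ a₂ b₂ : ℝ) (hab₁ : a₁ < b₁) (hab₂ : a₂ < b₂)
    (A₁₁ A₁₂ A₂₁ A₂₂ w₁ w₂ g₁ g₂ : ℝ × ℝ → ℝ)
    (hA₁₁ : ContinuousOn A₁₁ (Icc a₁ b₁ ×ˢ Icc a₂ b₂))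
    (hA₁₂ : ContinuousOn A₁₂ (Icc a₁ b₁ ×ˢ Icc a₂ b₂))
    (hA₂₁ : ContinuousOn A₂₁ (Icc a₁ b₁ ×ˢ Icc a₂ b₂))
    (hA₂₂ : ContinuousOn A₂₂ (Icc a₁ b₁ ×ˢ Icc a₂ b₂))
    (hA₁₁d : ∀ p ∈ interior (Icc a₁ b₁ ×ˢ Icc a₂ b₂), DifferentiableAt ℝ A₁₁ p)
    (hA₁₂d : ∀ p ∈ interior (Icc a₁ b₁ ×ˢ Icc a₂ b₂), DifferentiableAt ℝ A₁₂ p)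
    (hA₂₁d : ∀ p ∈ interior (Icc a₁ b₁ ×ˢ Icc a₂ b₂), DifferentiableAt ℝ A₂₁ p)
    (hA₂₂d : ∀ p ∈ interior (Icc a₁ b₁ ×ˢ Icc a₂ b₂), DifferentiableAt ℝ A₂₂ p)
    (hiA₁₁x : IntegrableOn (pdx A₁₁) (Icc a₁ b₁ ×ˢ Icc a₂ b₂))
    (hiA₁₁y : IntegrableOn (pdy A₁₁) (Icc a₁ b₁ ×ˢ Icc a₂ b₂))
    (hiA₁₂x : IntegrableOn (pdx A₁₂) (Icc a₁ b₁ ×ˢ Icc a₂ b₂))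
    (hiA₁₂y : IntegrableOn (pdy A₁₂) (Icc a₁ b₁ ×ˢ Icc a₂ b₂))
    (hiA₂₁x : IntegrableOn (pdx A₂₁) (Icc a₁ b₁ ×ˢ Icc a₂ b₂))
    (hiA₂₁y : IntegrableOn (pdy A₂₁) (Icc a₁ b₁ ×ˢ Icc a₂ b₂))
    (hiA₂₂x : IntegrableOn (pdx A₂₂) (Icc a₁ b₁ ×ˢ Icc a₂ b₂))
    (hiA₂₂y : IntegrableOn (pdy A₂₂) (Icc a₁ b₁ ×ˢ Icc a₂ b₂))
    (hw₁ : ContDiffOn ℝ 1 w₁ (Icc a₁ b₁ ×ˢ Icc a₂ b₂))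
    (hw₂ : ContDiffOn ℝ 1 w₂ (Icc a₁ b₁ ×ˢ Icc a₂ b₂))
    (hw₁d2 : ∀ p ∈ interior (Icc a₁ b₁ ×ˢ Icc a₂ b₂), DifferentiableAt ℝ (fderiv ℝ w₁) p)
    (hw₂d2 : ∀ p ∈ interior (Icc a₁ b₁ ×ˢ Icc a₂ b₂), DifferentiableAt ℝ (fderiv ℝ w₂) p)
    (hiw₁xx : IntegrableOn (pdx (pdx w₁)) (Icc a₁ b₁ ×ˢ Icc a₂ b₂))
    (hiw₁xy : IntegrableOn (pdy (pdx w₁)) (Icc a₁ b₁ ×ˢ Icc a₂ b₂))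
    (hiw₁yx : IntegrableOn (pdx (pdy w₁)) (Icc a₁ b₁ ×ˢ Icc a₂ b₂))
    (hiw₁yy : IntegrableOn (pdy (pdy w₁)) (Icc a₁ b₁ ×ˢ Icc a₂ b₂))
    (hiw₂xx : IntegrableOn (pdx (pdx w₂)) (Icc a₁ b₁ ×ˢ Icc a₂ b₂))
    (hiw₂xy : IntegrableOn (pdy (pdx w₂)) (Icc a₁ b₁ ×ˢ Icc a₂ b₂))
    (hiw₂yx : IntegrableOn (pdx (pdy w₂)) (Icc a₁ b₁ ×ˢ Icc a₂ b₂))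
    (hiw₂yy : IntegrableOn (pdy (pdy w₂)) (Icc a₁ b₁ ×ˢ Icc a₂ b₂))
    (hw₁0 : ∀ p ∈ frontier (Icc a₁ b₁ ×ˢ Icc a₂ b₂), w₁ p = 0)
    (hw₂0 : ∀ p ∈ frontier (Icc a₁ b₁ ×ˢ Icc a₂ b₂), w₂ p = 0)
    (hg₁ : ContDiffOn ℝ 1 g₁ (Icc a₁ b₁ ×ˢ Icc a₂ b₂))
    (hg₂ : ContDiffOn ℝ 1 g₂ (Icc a₁ b₁ ×ˢ Icc a₂ b₂))
    (hg₁d2 : ∀ p ∈ interior (Icc a₁ b₁ ×ˢ Icc a₂ b₂), DifferentiableAt ℝ (fderiv ℝ g₁) p)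
    (hg₂d2 : ∀ p ∈ interior (Icc a₁ b₁ ×ˢ Icc a₂ b₂), DifferentiableAt ℝ (fderiv ℝ g₂) p)
    (hig₁xx : IntegrableOn (pdx (pdx g₁)) (Icc a₁ b₁ ×ˢ Icc a₂ b₂))
    (hig₁xy : IntegrableOn (pdy (pdx g₁)) (Icc a₁ b₁ ×ˢ Icc a₂ b₂))
    (hig₁yx : IntegrableOn (pdx (pdy g₁)) (Icc a₁ b₁ ×ˢ Icc a₂ b₂))
    (hig₁yy : IntegrableOn (pdy (pdy g₁)) (Icc a₁ b₁ ×ˢ Icc a₂ b₂))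
    (hig₂xx : IntegrableOn (pdx (pdx g₂)) (Icc a₁ b₁ ×ˢ Icc a₂ b₂))
    (hig₂xy : IntegrableOn (pdy (pdx g₂)) (Icc a₁ b₁ ×ˢ Icc a₂ b₂))
    (hig₂yx : IntegrableOn (pdx (pdy g₂)) (Icc a₁ b₁ ×ˢ Icc a₂ b₂))
    (hig₂yy : IntegrableOn (pdy (pdy g₂)) (Icc a₁ b₁ ×ˢ Icc a₂ b₂))
    (hg₁0 : ∀ p ∈ frontier (Icc a₁ b₁ ×ˢ Icc a₂ b₂), g₁ p = 0)
    (hg₂0 : ∀ p ∈ frontier (Icc a₁ b₁ ×ˢ Icc a₂ b₂), g₂ p = 0)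
    (hpois₁ : ∀ p ∈ interior (Icc a₁ b₁ ×ˢ Icc a₂ b₂), lap g₁ p = pdx A₁₁ p + pdy A₁₂ p)
    (hpois₂ : ∀ p ∈ interior (Icc a₁ b₁ ×ˢ Icc a₂ b₂), lap g₂ p = pdx A₂₁ p + pdy A₂₂ p) :
    ∫ p in Icc a₁ b₁ ×ˢ Icc a₂ b₂,
        (-(A₁₁ p * pdx w₁ p + A₁₂ p * pdy w₁ p) - (A₂₁ p * pdx w₂ p + A₂₂ p * pdy w₂ p)) =
      ∫ p in Icc a₁ b₁ ×ˢ Icc a₂ b₂, (g₁ p * lap w₁ p + g₂ p * lap w₂ p) :=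
  adjoint_duality_step_general a₁ b₁ a₂ b₂ hab₁ hab₂ A₁₁ A₁₂ A₂₁ A₂₂ w₁ w₂ g₁ g₂ hA₁₁ hA₁₂ hA₂₁ hA₂₂
    hA₁₁d hA₁₂d hA₂₁d hA₂₂d hiA₁₁x hiA₁₂y hiA₂₁x hiA₂₂y hw₁ hw₂ hw₁d2 hw₂d2 hiw₁xx hiw₁yy hiw₂xx
    hiw₂yy hw₁0 hw₂0 hg₁ hg₂ hg₁d2 hg₂d2 hg₁0 hg₂0 hpois₁ hpois₂
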